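/- Let R ∈ k(x)^{n×p} admit a realisation R = X·M^{-1}·Y where X ∈ k[x]^{n×m}, M ∈ k[x]^{m×m} is non-singular, and Y ∈ k[x]^{m×p}. Then for all ℓ ≥ 0, the determinantal denominator φ_ℓ(R) divides det M (up to a nonzero scalar; i.e., the monic normalization of det M is divisible by φ_ℓ(R)). -/

import Mathlib

/-!
Every `i × i` minor of `R = X M⁻¹ Y` is `det (X' M⁻¹ Y')`, where `X'` keeps `i` rows of `X` and
`Y'` keeps `i` columns of `Y`. By the Schur complement, `det (X' M⁻¹ Y') * det M` equals
`± det [M Y'; X' 0]`, a polynomial, so the denominator of the minor divides `det M`.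
-/

open Polynomial

noncomputable section

/-- Normalization on a field: every nonzero element normalizes to `1`. -/
noncomputable def fieldNormalizationMonoid (K : Type*) [Field K] : NormalizationMonoid K := by
  classical
  exact
  { normUnit := fun a => if h : a = 0 then 1 else (Units.mk0 a h)⁻¹
    normUnit_zero := dif_pos rfl
    normUnit_one := by
      rw [dif_neg one_ne_zero]
      exact Units.ext (by simp)
    normUnit_mul_units := fun {a} u ha => by
      rw [dif_neg (mul_ne_zero ha u.ne_zero), dif_neg ha]
      exact Units.ext (by simp) }

attribute [local instance] fieldNormalizationMonoid

noncomputable local instance (K : Type*) [Field K] : NormalizedGCDMonoid (Polynomial K) :=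
  UniqueFactorizationMonoid.toNormalizedGCDMonoid _

variable {k : Type*} [Field k] [CharZero k]

/-- The ℓ-th determinantal denominator of a rational matrix: the monic least common
denominator of all minors of size at most ℓ. -/
def detDen {n p : ℕ} (R : Matrix (Fin n) (Fin p) (RatFunc k)) (ℓ : ℕ) : Polynomial k :=
  (Finset.range (ℓ + 1)).lcm fun i =>
    (Finset.univ : Finset ((Fin i ↪ Fin n) × (Fin i ↪ Fin p))).lcm fun fg =>
      (Matrix.det fun a b => R (fg.1 a) (fg.2 b)).denom

namespace Matrix

variable {ι m R : Type*} [Fintype ι] [DecidableEq ι] [Fintype m] [DecidableEq m] [CommRing R]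

theorem det_mul_nonsing_inv_mul_mul_det (X : Matrix ι m R) (M : Matrix m m R)
    (Y : Matrix m ι R) (hM : IsUnit M.det) :
    (X * M⁻¹ * Y).det * M.det = (-1) ^ Fintype.card ι * (fromBlocks M Y X 0).det := by
  let := M.invertibleOfIsUnitDet hM
  have hsign : ((-1 : R) ^ Fintype.card ι) * (-1) ^ Fintype.card ι = 1 := by
    rw [← pow_add, ← two_mul, pow_mul, neg_one_sq, one_pow]
  rw [det_fromBlocks₁₁, invOf_eq_nonsing_inv, zero_sub, det_neg]
  linear_combination (-(X * M⁻¹ * Y).det * M.det) * hsign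

end Matrix

theorem RatFunc.denom_det_mul_inv_mul_dvd {K ι m : Type*} [Field K] [Fintype ι] [DecidableEq ι]
    [Fintype m] [DecidableEq m] (X : Matrix ι m K[X]) (M : Matrix m m K[X])
    (Y : Matrix m ι K[X]) (hM : M.det ≠ 0) :
    (X.map (algebraMap K[X] (RatFunc K)) * (M.map (algebraMap K[X] (RatFunc K)))⁻¹ *
      Y.map (algebraMap K[X] (RatFunc K))).det.denom ∣ M.det := by
  set φ := algebraMap K[X] (RatFunc K)
  have hφM : φ M.det ≠ 0 := RatFunc.algebraMap_ne_zero hM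
  have hmap_det (A : Matrix m m K[X]) : (A.map φ).det = φ A.det :=
    (RingHom.map_det φ A).symm
  rw [RatFunc.denom_dvd hM]
  refine ⟨(-1) ^ Fintype.card ι * (Matrix.fromBlocks M Y X 0).det, ?_⟩
  have hunit : IsUnit (M.map φ).det := hmap_det M ▸ hφM.isUnit
  rw [eq_div_iff hφM, ← hmap_det, Matrix.det_mul_nonsing_inv_mul_mul_det _ _ _ hunit]
  simp [φ, RingHom.map_det, Matrix.fromBlocks_map]

/-- If `R = X M⁻¹ Y` is a realisation of `R` with `X, M, Y` polynomial matrices and `M`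
nonsingular, then for all `ℓ ≥ 0`, the determinantal denominator `φ_ℓ(R)` divides the monic
normalization of `det M`. -/
theorem detDen_realisation_dvd {n m p : ℕ} (R : Matrix (Fin n) (Fin p) (RatFunc k))
    (X : Matrix (Fin n) (Fin m) (Polynomial k)) (M : Matrix (Fin m) (Fin m) (Polynomial k))
    (Y : Matrix (Fin m) (Fin p) (Polynomial k)) (hM : M.det ≠ 0)
    (hR : R = (X.map (algebraMap (Polynomial k) (RatFunc k))) *
        (M.map (algebraMap (Polynomial k) (RatFunc k)))⁻¹ *
        (Y.map (algebraMap (Polynomial k) (RatFunc k))))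
    (ℓ : ℕ) :
    detDen R ℓ ∣ normalize M.det := by
  rw [dvd_normalize_iff]
  refine Finset.lcm_dvd fun i _ => Finset.lcm_dvd fun ⟨f, g⟩ _ => ?_
  have hminor : R.submatrix f g = (X.submatrix f id).map (algebraMap k[X] (RatFunc k)) *
      (M.map (algebraMap k[X] (RatFunc k)))⁻¹ *
      (Y.submatrix id g).map (algebraMap k[X] (RatFunc k)) := by
    rw [hR, Matrix.submatrix_mul _ _ _ id _ Function.bijective_id,
      Matrix.submatrix_mul _ _ _ id _ Function.bijective_id]
    simp only [Matrix.submatrix_map, Matrix.submatrix_id_id]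
  show (R.submatrix f g).det.denom ∣ _
  exact hminor ▸ RatFunc.denom_det_mul_inv_mul_dvd _ M _ hM
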